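/- Let p₁,…,p_d be nonnegative integers with p_d ≥ 2, α = p₁+⋯+p_{d−1}, and k = ⌊(p_d−2)/(α+1)⌋. If h = (a₁,…,a_{d+1}) ∈ Z^{d+1} with a_d = ±1 satisfies w_h(T_{p₁…p_d}) ≤ k+2, then w_h(T_{p₁…p_d}) = k+2. -/

import Mathlib

open scoped BigOperators

/-- Lattice width of a set `P ⊆ ℝ^d` in direction `h`:
`max_{x∈P} ⟨h,x⟩ − min_{x∈P} ⟨h,x⟩`. -/
noncomputable def width {d : ℕ} (P : Set (Fin d → ℝ)) (h : Fin d → ℝ) : ℝ :=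
  sSup ((fun x => ∑ i, h i * x i) '' P) - sInf ((fun x => ∑ i, h i * x i) '' P)

/-- `l₁(P) = max_{x∈P}(x₁+⋯+x_d) − Σᵢ min_{x∈P} xᵢ`. -/
noncomputable def l1 {d : ℕ} (P : Set (Fin d → ℝ)) : ℝ :=
  sSup ((fun x => ∑ i, x i) '' P) - ∑ i, sInf ((fun x => x i) '' P)

/-- `P` is a lattice polytope: the convex hull of a nonempty finite set of integer points. -/
def IsLatticePolytope {d : ℕ} (P : Set (Fin d → ℝ)) : Prop :=
  ∃ V : Finset (Fin d → ℝ), V.Nonempty ∧ (∀ v ∈ V, ∀ i, ∃ m : ℤ, v i = (m : ℝ)) ∧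
    P = convexHull ℝ (V : Set (Fin d → ℝ))

/-- `P` is a polytope: the convex hull of a nonempty finite set of points. -/
def IsPolytope {d : ℕ} (P : Set (Fin d → ℝ)) : Prop :=
  ∃ V : Finset (Fin d → ℝ), V.Nonempty ∧ P = convexHull ℝ (V : Set (Fin d → ℝ))

/-- The `i`-th standard basis vector of `ℝ^d`. -/
def stdVert (d : ℕ) (i : Fin d) : Fin d → ℝ := fun j => if j = i then 1 else 0

/-- The extra vertex `(p₁, …, pₙ, q, 1) ∈ ℝ^{n+2}`. -/
def Tvert (n : ℕ) (p : Fin n → ℤ) (q : ℤ) : Fin (n + 2) → ℝ :=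
  fun j => if h : (j : ℕ) < n then (p ⟨j, h⟩ : ℝ) else if (j : ℕ) = n then (q : ℝ) else 1

/-- The simplex `T_{p₁…p_{n} q} = conv{e₁,…,e_{n+2}, (p₁,…,pₙ,q,1)} ⊆ ℝ^{n+2}`. -/
noncomputable def Tsimp (n : ℕ) (p : Fin n → ℤ) (q : ℤ) : Set (Fin (n + 2) → ℝ) :=
  convexHull ℝ (insert (Tvert n p q) (Set.range (stdVert (n + 2))))

/-! The values of `h` at the vertices are the integers `a i` and `Tval n p q a`; they all lie
between `⌈min h⌉` and `⌊max h⌋` on the simplex, so it suffices to show that integers `m ≤ M`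
bounding them satisfy `M - m ≥ k + 2`. Replacing `a` by `-a` we may take `a_d = 1`. If
`M - m ≤ k + 1`, then `1 ≤ M` gives `m ≥ -k`, and the value at the extra vertex,
`≥ m α + p_d + m ≥ -k α + p_d + m`, forces `p_d - 1 ≤ k (α + 1) ≤ p_d - 2`. -/

lemma sum_mul_mem_Icc_of_isCompact {d : ℕ} {P : Set (Fin d → ℝ)} (hP : IsCompact P)
    (h : Fin d → ℝ) {x : Fin d → ℝ} (hx : x ∈ P) :
    ∑ i, h i * x i ∈
      Set.Icc (sInf ((fun x => ∑ i, h i * x i) '' P)) (sSup ((fun x => ∑ i, h i * x i) '' P)) := by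
  have hK : IsCompact ((fun x => ∑ i, h i * x i) '' P) := hP.image (by fun_prop)
  exact ⟨csInf_le hK.bddBelow ⟨x, hx, rfl⟩, le_csSup hK.bddAbove ⟨x, hx, rfl⟩⟩

lemma sum_mul_stdVert {d : ℕ} (h : Fin d → ℝ) (i : Fin d) :
    ∑ j, h j * stdVert d i j = h i := by
  simp [stdVert]

def Tval (n : ℕ) (p : Fin n → ℤ) (q : ℤ) (a : Fin (n + 2) → ℤ) : ℤ :=
  ∑ i : Fin n, a i.castSucc.castSucc * p i + a ⟨n, by omega⟩ * q + a ⟨n + 1, by omega⟩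

lemma Tval_neg (n : ℕ) (p : Fin n → ℤ) (q : ℤ) (a : Fin (n + 2) → ℤ) :
    Tval n p q (-a) = -Tval n p q a := by
  simp only [Tval, Pi.neg_apply, neg_mul, Finset.sum_neg_distrib]
  ring

lemma sum_mul_Tvert (n : ℕ) (p : Fin n → ℤ) (q : ℤ) (a : Fin (n + 2) → ℤ) :
    ∑ j, (a j : ℝ) * Tvert n p q j = Tval n p q a := by
  have hp : ∀ i : Fin n, Tvert n p q i.castSucc.castSucc = p i := fun i => by simp [Tvert]
  have hq : Tvert n p q (Fin.last n).castSucc = q := by simp [Tvert]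
  have hlast : Tvert n p q (Fin.last (n + 1)) = 1 := by simp [Tvert]
  rw [Fin.sum_univ_castSucc, Fin.sum_univ_castSucc, hq, hlast]
  simp only [hp, Tval]
  push_cast
  rw [mul_one]
  rfl

lemma stdVert_mem_Tsimp (n : ℕ) (p : Fin n → ℤ) (q : ℤ) (i : Fin (n + 2)) :
    stdVert (n + 2) i ∈ Tsimp n p q :=
  subset_convexHull ℝ _ (Set.mem_insert_of_mem _ ⟨i, rfl⟩)

lemma Tvert_mem_Tsimp (n : ℕ) (p : Fin n → ℤ) (q : ℤ) : Tvert n p q ∈ Tsimp n p q :=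
  subset_convexHull ℝ _ (Set.mem_insert _ _)

lemma isCompact_Tsimp (n : ℕ) (p : Fin n → ℤ) (q : ℤ) : IsCompact (Tsimp n p q) :=
  ((Set.finite_range _).insert _).isCompact_convexHull ℝ

lemma add_two_le_of_coord_eq_one {n : ℕ} {p : Fin n → ℤ} (hp : ∀ i, 0 ≤ p i) (q : ℤ)
    {a : Fin (n + 2) → ℤ} (ha : a ⟨n, by omega⟩ = 1) {m M : ℤ} (hm : ∀ i, m ≤ a i)
    (hM : a ⟨n, by omega⟩ ≤ M) (hTM : Tval n p q a ≤ M) :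
    (q - 2) / (∑ i, p i + 1) + 2 ≤ M - m := by
  set α := ∑ i, p i
  set k := (q - 2) / (α + 1)
  have hα : 0 ≤ α := Finset.sum_nonneg fun i _ => hp i
  have hk : k * (α + 1) ≤ q - 2 := Int.ediv_mul_le _ (by omega)
  by_contra! hlt
  have hmk : 0 ≤ m + k := by omega
  have hsum : m * α ≤ ∑ i : Fin n, a i.castSucc.castSucc * p i := by
    rw [Finset.mul_sum]
    exact Finset.sum_le_sum fun i _ => mul_le_mul_of_nonneg_right (hm _) (hp i)
  have hT : m * α + q + m ≤ Tval n p q a := by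
    have := hm ⟨n + 1, by omega⟩
    simp only [Tval, ha]
    omega
  nlinarith [mul_nonneg hα hmk]

lemma add_two_le_of_coord_eq_one_or_neg_one {n : ℕ} {p : Fin n → ℤ} (hp : ∀ i, 0 ≤ p i) (q : ℤ)
    {a : Fin (n + 2) → ℤ} (ha : a ⟨n, by omega⟩ = 1 ∨ a ⟨n, by omega⟩ = -1) {m M : ℤ}
    (hm : ∀ i, m ≤ a i) (hM : ∀ i, a i ≤ M) (hmT : m ≤ Tval n p q a) (hTM : Tval n p q a ≤ M) :
    (q - 2) / (∑ i, p i + 1) + 2 ≤ M - m := by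
  rcases ha with ha | ha
  · exact add_two_le_of_coord_eq_one hp q ha hm (hM _) hTM
  · have key := add_two_le_of_coord_eq_one hp q (a := -a) (m := -M) (M := -m)
      (by simp [ha]) (fun i => neg_le_neg (hM i)) (neg_le_neg (hm _))
      (by rw [Tval_neg]; exact neg_le_neg hmT)
    omega

/-- if `a_d = ±1` and `w_h(T_{p₁…p_d}) ≤ k+2`, then `w_h(T_{p₁…p_d}) = k+2`.
(Here `n = d−1`, `q = p_d`, and `a_d` is the coordinate of index `n`.) -/
theorem width_eq_of_coord_pm_one (n : ℕ) (p : Fin n → ℤ) (hp : ∀ i, 0 ≤ p i) (q : ℤ)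
    (α k : ℤ) (hα : α = ∑ i, p i) (hk : k = (q - 2) / (α + 1))
    (a : Fin (n + 2) → ℤ) (ha : a ⟨n, by omega⟩ = 1 ∨ a ⟨n, by omega⟩ = -1)
    (hw : width (Tsimp n p q) (fun i => (a i : ℝ)) ≤ (k : ℝ) + 2) :
    width (Tsimp n p q) (fun i => (a i : ℝ)) = (k : ℝ) + 2 := by
  set lo := sInf ((fun x => ∑ i, (a i : ℝ) * x i) '' Tsimp n p q)
  set hi := sSup ((fun x => ∑ i, (a i : ℝ) * x i) '' Tsimp n p q)
  have hvert {x} (hx : x ∈ Tsimp n p q) : ∑ i, (a i : ℝ) * x i ∈ Set.Icc lo hi :=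
    sum_mul_mem_Icc_of_isCompact (isCompact_Tsimp n p q) _ hx
  have hcoord (i : Fin (n + 2)) : a i ∈ Set.Icc ⌈lo⌉ ⌊hi⌋ := by
    have := hvert (stdVert_mem_Tsimp n p q i)
    rw [sum_mul_stdVert] at this
    exact ⟨Int.ceil_le.2 this.1, Int.le_floor.2 this.2⟩
  have hextra : Tval n p q a ∈ Set.Icc ⌈lo⌉ ⌊hi⌋ := by
    have := hvert (Tvert_mem_Tsimp n p q)
    rw [sum_mul_Tvert] at this
    exact ⟨Int.ceil_le.2 this.1, Int.le_floor.2 this.2⟩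
  have key := add_two_le_of_coord_eq_one_or_neg_one hp q ha (fun i => (hcoord i).1)
    (fun i => (hcoord i).2) hextra.1 hextra.2
  rw [← hα, ← hk] at key
  refine le_antisymm hw ?_
  calc (k : ℝ) + 2 ≤ (⌊hi⌋ - ⌈lo⌉ : ℤ) := by exact_mod_cast key
    _ ≤ hi - lo := by push_cast; linarith [Int.floor_le hi, Int.le_ceil lo]
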